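/- Fix positive integers d and L, and type sequences w, v ∈ {+,−}^k having the same number of '+' entries p and the same number of '−' entries q. Fix (d,L)-staircases μ and λ, and vectors a ∈ ℕ^p, b ∈ ℕ^q. Then the number of skew (d,L)-cylindric row-strict w-oscillating tableaux with inner shape μ, outer shape λ, wt⁺ = a and wt⁻ = b equals the number of skew (d,L)-cylindric row-strict v-oscillating tableaux with inner shape μ, outer shape λ, wt⁺ = a and wt⁻ = b. -/

import Mathlib

/-!
Exchanging two adjacent letters `+−` of the type sequence into `−+` only changes the shape `β`
between them: a common cover of its neighbours `x` and `z` must be traded for a common cocover `δ`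
with `|δ| = |x| + |z| - |β|`. Common covers are `min x z + t` and common cocovers `max x z - t` for
bit vectors `t` equal to `1` wherever `x ≠ z`. Unrolled along the cylinder `ℤ`, the staircase
condition says exactly that `t` decreases (for covers), resp. increases (for cocovers), along every
maximal run of cells where `x = z` and `min x z` stays level; these runs are finite because `L > 0`.
Reversing `t` on every run is therefore the required bijection. Finally, any two type sequences
with the same number of `+` are linked by such exchanges through the sorted word `−⋯−+⋯+`.
-/

/-- `α ≺'_{(d,L)} β` for `d`-staircases: both are `(d,L)`-staircases (weakly decreasing
integer tuples with `λ₁ - λ_d ≤ L`) and `β_i - α_i ∈ {0,1}` for all `i` (0-indexed). -/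
def CoCylInterlace (d L : ℕ) (α β : Fin d → ℤ) : Prop :=
  Antitone α ∧ Antitone β ∧
  (∀ h : 0 < d,
    α ⟨0, h⟩ - α ⟨d - 1, Nat.sub_lt h Nat.one_pos⟩ ≤ (L : ℤ) ∧
    β ⟨0, h⟩ - β ⟨d - 1, Nat.sub_lt h Nat.one_pos⟩ ≤ (L : ℤ)) ∧
  ∀ i, β i = α i ∨ β i = α i + 1

/-- `T` is a skew `(d,L)`-cylindric row-strict `w`-oscillating tableau with inner shape
`μ` and outer shape `lam`: a sequence of `d`-staircases with `λ⁽ⁱ⁻¹⁾ ≺'_{(d,L)} λ⁽ⁱ⁾`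
when `w i = +` (here `true`) and `λ⁽ⁱ⁾ ≺'_{(d,L)} λ⁽ⁱ⁻¹⁾` when `w i = −`
(here `false`). -/
def IsSkewRowStrictOsc (d L k : ℕ) (w : Fin k → Bool) (μ lam : Fin d → ℤ)
    (T : Fin (k + 1) → Fin d → ℤ) : Prop :=
  T 0 = μ ∧ T (Fin.last k) = lam ∧
  ∀ i : Fin k,
    if w i then CoCylInterlace d L (T i.castSucc) (T i.succ)
    else CoCylInterlace d L (T i.succ) (T i.castSucc)

/-- `T` has `wt⁺ = a`: for each `i`, the size increase across the `i`-th occurrence of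
`+` in `w` is `a i`. -/
def HasWtPlus (d k p : ℕ) (w : Fin k → Bool)
    (hp : (Finset.univ.filter fun i : Fin k => w i = true).card = p)
    (T : Fin (k + 1) → Fin d → ℤ) (a : Fin p → ℕ) : Prop :=
  ∀ i : Fin p,
    (∑ j, T (Fin.succ ((Finset.univ.filter fun i : Fin k => w i = true).orderIsoOfFin hp i).1) j) =
    (∑ j, T (Fin.castSucc
        ((Finset.univ.filter fun i : Fin k => w i = true).orderIsoOfFin hp i).1) j) + (a i : ℤ)

/-- `T` has `wt⁻ = b`: for each `i`, the size decrease across the `i`-th-to-last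
occurrence of `−` in `w` is `b i`. -/
def HasWtMinus (d k q : ℕ) (w : Fin k → Bool)
    (hq : (Finset.univ.filter fun i : Fin k => w i = false).card = q)
    (T : Fin (k + 1) → Fin d → ℤ) (b : Fin q → ℕ) : Prop :=
  ∀ i : Fin q,
    (∑ j, T (Fin.castSucc
        ((Finset.univ.filter fun i : Fin k => w i = false).orderIsoOfFin hq i.rev).1) j) =
    (∑ j, T (Fin.succ
        ((Finset.univ.filter fun i : Fin k => w i = false).orderIsoOfFin hq i.rev).1) j) + (b i : ℤ)

namespace SkewRowStrict

variable {d : ℕ}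

section Cylinder

variable (hd : 0 < d)

def finMod (n : ℤ) : Fin d :=
  ⟨(n % d).toNat, by have := Int.emod_lt_of_pos n (by omega : (0 : ℤ) < d); omega⟩

lemma finMod_add_ediv (n : ℤ) : (finMod hd n : ℤ) + d * (n / d) = n := by
  have := Int.emod_nonneg n (by omega : (d : ℤ) ≠ 0)
  simp only [finMod, Int.toNat_of_nonneg this, Int.emod_add_mul_ediv]

lemma finMod_add_mul (n c : ℤ) : finMod hd (n + d * c) = finMod hd n := by
  simp only [finMod, Int.add_mul_emod_self_left]

lemma finMod_fin_add_mul (i : Fin d) (c : ℤ) : finMod hd (i + d * c) = i := by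
  ext
  simp [finMod, Int.add_mul_emod_self_left, Int.emod_eq_of_lt (by omega : (0 : ℤ) ≤ i)
    (by omega : (i : ℤ) < d)]

def IsStaircase (L : ℕ) (f : Fin d → ℤ) : Prop :=
  Antitone f ∧ f ⟨0, hd⟩ - f ⟨d - 1, Nat.sub_lt hd Nat.one_pos⟩ ≤ L

/-- The staircase `f` unrolled along the cylinder: `cylExt f (i + d * c) = f i - c * L`. -/
def cylExt (L : ℕ) (f : Fin d → ℤ) (n : ℤ) : ℤ :=
  f (finMod hd n) - n / d * L

variable {hd} {L : ℕ} {f : Fin d → ℤ}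

lemma cylExt_fin_add_mul (i : Fin d) (c : ℤ) : cylExt hd L f (i + d * c) = f i - c * L := by
  rw [cylExt, finMod_fin_add_mul, Int.add_mul_ediv_left _ _ (by omega),
    Int.ediv_eq_zero_of_lt (by omega) (by omega), zero_add]

lemma cylExt_fin (i : Fin d) : cylExt hd L f i = f i := by
  simpa using cylExt_fin_add_mul (hd := hd) (L := L) (f := f) i 0

lemma cylExt_add_mul (n c : ℤ) : cylExt hd L f (n + d * c) = cylExt hd L f n - c * L := by
  simp only [cylExt, finMod_add_mul, Int.add_mul_ediv_left _ _ (by omega : (d : ℤ) ≠ 0)]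
  ring

lemma isStaircase_iff_cylExt :
    IsStaircase hd L f ↔ ∀ n, cylExt hd L f (n + 1) ≤ cylExt hd L f n := by
  constructor
  · rintro ⟨hf, hwrap⟩ n
    set i := finMod hd n
    have hn : n = i + d * (n / d) := (finMod_add_ediv hd n).symm
    rw [hn, cylExt_fin_add_mul]
    by_cases hi : (i : ℕ) + 1 < d
    · have := cylExt_fin_add_mul (hd := hd) (L := L) (f := f) ⟨i + 1, hi⟩ (n / d)
      push_cast at this
      rw [add_right_comm, this]
      linarith [hf (show i ≤ ⟨i + 1, hi⟩ from Fin.le_def.2 (by simp))]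
    · have := cylExt_fin_add_mul (hd := hd) (L := L) (f := f) ⟨0, hd⟩ (n / d + 1)
      have hlast : i = ⟨d - 1, Nat.sub_lt hd Nat.one_pos⟩ := by ext; simp; omega
      rw [show (i : ℤ) + d * (n / d) + 1 = ((⟨0, hd⟩ : Fin d) : ℕ) + d * (n / d + 1) by
        simp only [hlast]; push_cast [Nat.cast_sub hd]; ring, this, hlast]
      linarith
  · intro h
    have hanti : Antitone (cylExt hd L f) := antitone_int_of_succ_le h
    refine ⟨fun i j hij => ?_, ?_⟩
    · simpa only [cylExt_fin] using hanti (Int.ofNat_le.2 hij)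
    · have := h (d - 1)
      rw [show (d : ℤ) - 1 + 1 = ((⟨0, hd⟩ : Fin d) : ℕ) + d * 1 by simp,
        cylExt_fin_add_mul] at this
      rw [show (d : ℤ) - 1 = ((⟨d - 1, Nat.sub_lt hd Nat.one_pos⟩ : Fin d) : ℕ) by simp; omega,
        cylExt_fin] at this
      linarith

end Cylinder

section RunReflection

open scoped Classical

variable (P : ℤ → Prop) (hup : ∀ n, ∃ j : ℕ, ¬ P (n + j)) (hdown : ∀ n, ∃ j : ℕ, ¬ P (n - 1 - j))

/-- `P m` links `m` to `m + 1`; the maximal linked run through `n` is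
`[n - runBelow n, n + runAbove n]`. -/
noncomputable def runAbove (n : ℤ) : ℕ := Nat.find (hup n)

noncomputable def runBelow (n : ℤ) : ℕ := Nat.find (hdown n)

/-- Reflection of `n` in the midpoint of its run. -/
noncomputable def runReflect (n : ℤ) : ℤ := n + runAbove P hup n - runBelow P hdown n

variable {P hup hdown} {n : ℤ}

lemma runAbove_eq_iff {m : ℕ} : runAbove P hup n = m ↔ ¬ P (n + m) ∧ ∀ j < m, P (n + j) := by
  simp only [runAbove, Nat.find_eq_iff, not_not]

lemma runBelow_eq_iff {m : ℕ} :
    runBelow P hdown n = m ↔ ¬ P (n - 1 - m) ∧ ∀ j < m, P (n - 1 - j) := by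
  simp only [runBelow, Nat.find_eq_iff, not_not]

lemma linked_of_mem_run {m : ℤ} (h₁ : n - runBelow P hdown n ≤ m)
    (h₂ : m < n + runAbove P hup n) : P m := by
  obtain ⟨-, hbelow⟩ := runBelow_eq_iff.1 (rfl : runBelow P hdown n = _)
  obtain ⟨-, habove⟩ := runAbove_eq_iff.1 (rfl : runAbove P hup n = _)
  rcases le_or_gt n m with hm | hm
  · simpa [Int.toNat_of_nonneg (sub_nonneg.2 hm)] using habove (m - n).toNat (by omega)
  · simpa [Int.toNat_of_nonneg (by omega : 0 ≤ n - 1 - m)] using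
      hbelow (n - 1 - m).toNat (by omega)

lemma runAbove_succ (h : P n) : runAbove P hup n = runAbove P hup (n + 1) + 1 := by
  obtain ⟨hend, hrun⟩ := runAbove_eq_iff.1 (rfl : runAbove P hup (n + 1) = _)
  refine runAbove_eq_iff.2 ⟨by push_cast; rwa [← add_assoc, add_right_comm], fun j hj => ?_⟩
  rcases j with _ | j
  · simpa using h
  · simpa [add_assoc, add_comm (1 : ℤ)] using hrun j (by omega)

lemma runBelow_succ (h : P n) : runBelow P hdown (n + 1) = runBelow P hdown n + 1 := by
  obtain ⟨hend, hrun⟩ := runBelow_eq_iff.1 (rfl : runBelow P hdown n = _)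
  refine runBelow_eq_iff.2 ⟨by push_cast; ring_nf at hend ⊢; exact hend, fun j hj => ?_⟩
  rcases j with _ | j
  · simpa using h
  · have := hrun j (by omega)
    push_cast; ring_nf at this ⊢; exact this

lemma runBelow_runReflect : runBelow P hdown (runReflect P hup hdown n) = runAbove P hup n :=
  runBelow_eq_iff.2
    ⟨by
      convert (runBelow_eq_iff.1 (rfl : runBelow P hdown n = _)).1 using 2
      unfold runReflect; ring,
     fun j hj => linked_of_mem_run (n := n) (by unfold runReflect; omega)
       (by unfold runReflect; omega)⟩

lemma runAbove_runReflect : runAbove P hup (runReflect P hup hdown n) = runBelow P hdown n :=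
  runAbove_eq_iff.2
    ⟨by
      convert (runAbove_eq_iff.1 (rfl : runAbove P hup n = _)).1 using 2
      unfold runReflect; ring,
     fun j hj => linked_of_mem_run (n := n) (by unfold runReflect; omega)
       (by unfold runReflect; omega)⟩

lemma runReflect_runReflect : runReflect P hup hdown (runReflect P hup hdown n) = n := by
  have h₁ := runBelow_runReflect (hup := hup) (hdown := hdown) (n := n)
  have h₂ := runAbove_runReflect (hup := hup) (hdown := hdown) (n := n)
  unfold runReflect at *
  omega

lemma runReflect_succ (h : P n) :
    runReflect P hup hdown (n + 1) = runReflect P hup hdown n - 1 := by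
  have h₁ := runAbove_succ (hup := hup) h
  have h₂ := runBelow_succ (hdown := hdown) h
  unfold runReflect
  omega

lemma runReflect_of_not_linked (h₁ : ¬ P (n - 1)) (h₂ : ¬ P n) : runReflect P hup hdown n = n := by
  have hb : runBelow P hdown n = 0 := runBelow_eq_iff.2 ⟨by simpa using h₁, by simp⟩
  have ha : runAbove P hup n = 0 := runAbove_eq_iff.2 ⟨by simpa using h₂, by simp⟩
  simp [runReflect, ha, hb]

lemma runReflect_add_period {N : ℤ} (hper : ∀ m, P (m + N) ↔ P m) :
    runReflect P hup hdown (n + N) = runReflect P hup hdown n + N := by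
  have ha : runAbove P hup (n + N) = runAbove P hup n := by
    obtain ⟨hend, hrun⟩ := runAbove_eq_iff.1 (rfl : runAbove P hup n = _)
    refine runAbove_eq_iff.2 ⟨?_, fun j hj => ?_⟩
    · rwa [add_right_comm, hper]
    · rw [add_right_comm, hper]; exact hrun j hj
  have hb : runBelow P hdown (n + N) = runBelow P hdown n := by
    obtain ⟨hend, hrun⟩ := runBelow_eq_iff.1 (rfl : runBelow P hdown n = _)
    refine runBelow_eq_iff.2 ⟨?_, fun j hj => ?_⟩
    · rwa [show n + N - 1 - _ = n - 1 - (runBelow P hdown n : ℤ) + N by ring, hper]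
    · rw [show n + N - 1 - (j : ℤ) = n - 1 - j + N by ring, hper]; exact hrun j hj
  unfold runReflect
  rw [ha, hb]
  ring

lemma rel_runReflect {α : Type*} (R : α → α → Prop) (s : ℤ → α)
    (hs : ∀ m, P m → R (s (m + 1)) (s m)) (h : P n) :
    R (s (runReflect P hup hdown n)) (s (runReflect P hup hdown (n + 1))) := by
  have hlink : P (runReflect P hup hdown n - 1) := by
    have habove := runAbove_succ (hup := hup) h
    exact linked_of_mem_run (n := n) (by unfold runReflect; omega) (by unfold runReflect; omega)
  simpa [runReflect_succ h] using hs _ hlink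

end RunReflection

section Linked

variable (hd : 0 < d) (L : ℕ) (x z : Fin d → ℤ)

def Linked (n : ℤ) : Prop :=
  cylExt hd L (fun i => min (x i) (z i)) (n + 1) = cylExt hd L (fun i => min (x i) (z i)) n ∧
    x (finMod hd n) = z (finMod hd n) ∧ x (finMod hd (n + 1)) = z (finMod hd (n + 1))

variable {hd L x z}

lemma linked_add_mul_iff (n c : ℤ) : Linked hd L x z (n + d * c) ↔ Linked hd L x z n := by
  simp only [Linked, add_right_comm n (d * c), cylExt_add_mul, finMod_add_mul, sub_left_inj]

/-- The row `min x z` drops by `L > 0` along every period, so no period is entirely linked. -/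
lemma exists_not_linked (hL : 0 < L) (n : ℤ) : ∃ j : ℕ, j < d ∧ ¬ Linked hd L x z (n + j) := by
  by_contra! h
  have hconst : ∀ j : ℕ, j ≤ d → cylExt hd L (fun i => min (x i) (z i)) (n + j) =
      cylExt hd L (fun i => min (x i) (z i)) n := by
    intro j hj
    induction j with
    | zero => simp
    | succ j ih => push_cast; rw [← add_assoc, (h j (by omega)).1, ih (by omega)]
  have := cylExt_add_mul (hd := hd) (L := L) (f := fun i => min (x i) (z i)) n 1
  rw [mul_one, hconst d le_rfl] at this
  omega

lemma exists_not_linked_above (hL : 0 < L) (n : ℤ) : ∃ j : ℕ, ¬ Linked hd L x z (n + j) :=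
  (exists_not_linked hL n).imp fun _ => And.right

lemma exists_not_linked_below (hL : 0 < L) (n : ℤ) :
    ∃ j : ℕ, ¬ Linked hd L x z (n - 1 - j) := by
  obtain ⟨j, hj, hlink⟩ := exists_not_linked (x := x) (z := z) hL (n - d)
  exact ⟨d - 1 - j, by rwa [show n - 1 - ((d - 1 - j : ℕ) : ℤ) = n - d + j by omega]⟩

end Linked

section ColumnReflection

variable (hd : 0 < d) {L : ℕ} (hL : 0 < L) (x z : Fin d → ℤ)

noncomputable def linkReflect : ℤ → ℤ :=
  runReflect (Linked hd L x z) (exists_not_linked_above hL) (exists_not_linked_below hL)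

/-- Well defined on columns because the linked runs are invariant under translation by `d`. -/
noncomputable def colReflect (i : Fin d) : Fin d :=
  finMod hd (linkReflect hd hL x z i)

variable {hd hL x z}

lemma colReflect_finMod (n : ℤ) :
    colReflect hd hL x z (finMod hd n) = finMod hd (linkReflect hd hL x z n) := by
  conv_rhs => rw [← finMod_add_ediv hd n]
  rw [colReflect, linkReflect, runReflect_add_period (fun m => linked_add_mul_iff m _),
    finMod_add_mul]

lemma colReflect_involutive : Function.Involutive (colReflect hd hL x z) := by
  intro i
  change colReflect hd hL x z (finMod hd (linkReflect hd hL x z i)) = i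
  rw [colReflect_finMod, linkReflect, runReflect_runReflect]
  simpa using finMod_fin_add_mul hd i 0

lemma colReflect_of_ne {i : Fin d} (h : x i ≠ z i) : colReflect hd hL x z i = i := by
  have hfin : finMod hd (i : ℤ) = i := by simpa using finMod_fin_add_mul hd i 0
  rw [colReflect, linkReflect, runReflect_of_not_linked, hfin]
  · exact fun hl => h (by simpa [hfin] using hl.2.2)
  · exact fun hl => h (by simpa [hfin] using hl.2.1)

lemma sum_comp_colReflect {M : Type*} [AddCommMonoid M] (g : Fin d → M) :
    ∑ i, g (colReflect hd hL x z i) = ∑ i, g i :=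
  Equiv.sum_comp (colReflect_involutive.toPerm _) g

lemma comp_colReflect_rel {α : Type*} (R : α → α → Prop) {t : Fin d → α}
    (ht : ∀ n, Linked hd L x z n → R (t (finMod hd (n + 1))) (t (finMod hd n)))
    {n : ℤ} (hn : Linked hd L x z n) :
    R (t (colReflect hd hL x z (finMod hd n))) (t (colReflect hd hL x z (finMod hd (n + 1)))) := by
  rw [colReflect_finMod, colReflect_finMod]
  exact rel_runReflect R (t ∘ finMod hd) ht hn

end ColumnReflection

section Fills

structure Compatible (hd : 0 < d) (L : ℕ) (x z : Fin d → ℤ) : Prop where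
  left : IsStaircase hd L x
  right : IsStaircase hd L z
  close : ∀ i, x i ≤ z i + 1 ∧ z i ≤ x i + 1

def upperFill (x z : Fin d → ℤ) (t : Fin d → Bool) (i : Fin d) : ℤ :=
  min (x i) (z i) + (t i).toNat

def lowerFill (x z : Fin d → ℤ) (t : Fin d → Bool) (i : Fin d) : ℤ :=
  max (x i) (z i) - (t i).toNat

variable {L : ℕ} {hd : 0 < d} {x z : Fin d → ℤ} {t : Fin d → Bool}

lemma Compatible.isStaircase_min (hc : Compatible hd L x z) :
    IsStaircase hd L (fun i => min (x i) (z i)) := by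
  refine ⟨hc.left.1.min hc.right.1, ?_⟩
  have := hc.left.2; have := hc.right.2
  dsimp only
  omega

lemma Compatible.isStaircase_max (hc : Compatible hd L x z) :
    IsStaircase hd L (fun i => max (x i) (z i)) := by
  refine ⟨hc.left.1.max hc.right.1, ?_⟩
  have := hc.left.2; have := hc.right.2
  dsimp only
  omega

lemma Compatible.cylExt_max (hc : Compatible hd L x z) (n : ℤ) :
    cylExt hd L (fun i => max (x i) (z i)) n = cylExt hd L (fun i => min (x i) (z i)) n +
      if x (finMod hd n) = z (finMod hd n) then 0 else 1 := by
  have := hc.close (finMod hd n)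
  simp only [cylExt]
  split_ifs <;> omega

lemma cylExt_upperFill (n : ℤ) : cylExt hd L (upperFill x z t) n =
    cylExt hd L (fun i => min (x i) (z i)) n + (t (finMod hd n)).toNat := by
  simp only [cylExt, upperFill]; ring

lemma cylExt_lowerFill (n : ℤ) : cylExt hd L (lowerFill x z t) n =
    cylExt hd L (fun i => max (x i) (z i)) n - (t (finMod hd n)).toNat := by
  simp only [cylExt, lowerFill]; ring

lemma isStaircase_upperFill_iff (hc : Compatible hd L x z) (ht : ∀ i, x i ≠ z i → t i) :
    IsStaircase hd L (upperFill x z t) ↔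
      ∀ n, Linked hd L x z n → (t (finMod hd (n + 1))).toNat ≤ (t (finMod hd n)).toNat := by
  simp only [isStaircase_iff_cylExt, cylExt_upperFill]
  refine ⟨fun h n hn => by have := h n; have := hn.1; omega, fun h n => ?_⟩
  have hmin := isStaircase_iff_cylExt.1 hc.isStaircase_min n
  have hmax := isStaircase_iff_cylExt.1 hc.isStaircase_max n
  rw [hc.cylExt_max, hc.cylExt_max] at hmax
  have hbit := fun m => Bool.toNat_le (t (finMod hd m))
  by_cases hfree : x (finMod hd n) = z (finMod hd n)
  · by_cases hfree' : x (finMod hd (n + 1)) = z (finMod hd (n + 1))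
    · by_cases hlevel : cylExt hd L (fun i => min (x i) (z i)) (n + 1) =
          cylExt hd L (fun i => min (x i) (z i)) n
      · have := h n ⟨hlevel, hfree, hfree'⟩; omega
      · have := hbit n; have := hbit (n + 1); omega
    · simp only [hfree, hfree', if_true, if_false] at hmax
      have := hbit n; have := hbit (n + 1); omega
  · simp only [ht _ hfree, Bool.toNat_true]
    have := hbit (n + 1); omega

lemma isStaircase_lowerFill_iff (hc : Compatible hd L x z) (ht : ∀ i, x i ≠ z i → t i) :
    IsStaircase hd L (lowerFill x z t) ↔
      ∀ n, Linked hd L x z n → (t (finMod hd n)).toNat ≤ (t (finMod hd (n + 1))).toNat := by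
  simp only [isStaircase_iff_cylExt, cylExt_lowerFill, hc.cylExt_max]
  refine ⟨fun h n hn => ?_, fun h n => ?_⟩
  · have := h n
    rw [if_pos hn.2.1, if_pos hn.2.2] at this
    have := hn.1
    omega
  have hmin := isStaircase_iff_cylExt.1 hc.isStaircase_min n
  have hmax := isStaircase_iff_cylExt.1 hc.isStaircase_max n
  rw [hc.cylExt_max, hc.cylExt_max] at hmax
  have hbit := fun m => Bool.toNat_le (t (finMod hd m))
  by_cases hfree : x (finMod hd n) = z (finMod hd n)
  · by_cases hfree' : x (finMod hd (n + 1)) = z (finMod hd (n + 1))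
    · by_cases hlevel : cylExt hd L (fun i => min (x i) (z i)) (n + 1) =
          cylExt hd L (fun i => min (x i) (z i)) n
      · have := h n ⟨hlevel, hfree, hfree'⟩; simp only [hfree, hfree']; omega
      · simp only [hfree, hfree', if_true] at hmax ⊢
        have := hbit n; have := hbit (n + 1); omega
    · simp only [hfree, hfree', if_true, if_false, ht _ hfree', Bool.toNat_true] at hmax ⊢
      have := hbit n; omega
  · by_cases hfree' : x (finMod hd (n + 1)) = z (finMod hd (n + 1))
    · simp only [hfree, hfree', if_true, if_false] at hmax ⊢
      have := hbit n; have := hbit (n + 1); omega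
    · simp only [hfree, hfree', if_false, ht _ hfree, ht _ hfree', Bool.toNat_true] at hmax ⊢
      omega

end Fills

section CommonCovers

variable {L : ℕ} {hd : 0 < d} {x z : Fin d → ℤ}

lemma isStaircase_of_co_left {α β : Fin d → ℤ} (h : CoCylInterlace d L α β) :
    IsStaircase hd L α :=
  ⟨h.1, (h.2.2.1 hd).1⟩

lemma isStaircase_of_co_right {α β : Fin d → ℤ} (h : CoCylInterlace d L α β) :
    IsStaircase hd L β :=
  ⟨h.2.1, (h.2.2.1 hd).2⟩

lemma compatible_of_co_co {β : Fin d → ℤ} (hx : CoCylInterlace d L x β)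
    (hz : CoCylInterlace d L z β) : Compatible hd L x z :=
  ⟨isStaircase_of_co_left hx, isStaircase_of_co_left hz, fun i => by
    have := hx.2.2.2 i; have := hz.2.2.2 i; omega⟩

lemma compatible_of_co_co' {δ : Fin d → ℤ} (hx : CoCylInterlace d L δ x)
    (hz : CoCylInterlace d L δ z) : Compatible hd L x z :=
  ⟨isStaircase_of_co_right hx, isStaircase_of_co_right hz, fun i => by
    have := hx.2.2.2 i; have := hz.2.2.2 i; omega⟩

variable (x z)

def coverBits (β : Fin d → ℤ) (i : Fin d) : Bool := decide (β i ≠ min (x i) (z i))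

def cocoverBits (δ : Fin d → ℤ) (i : Fin d) : Bool := decide (δ i ≠ max (x i) (z i))

variable {x z} {t : Fin d → Bool}

lemma coverBits_upperFill : coverBits x z (upperFill x z t) = t := by
  ext i; cases h : t i <;> simp [coverBits, upperFill, h]

lemma cocoverBits_lowerFill : cocoverBits x z (lowerFill x z t) = t := by
  ext i; cases h : t i <;> simp [cocoverBits, lowerFill, h]

section

variable {β : Fin d → ℤ} (hx : CoCylInterlace d L x β) (hz : CoCylInterlace d L z β)
include hx hz

lemma upperFill_coverBits : upperFill x z (coverBits x z β) = β := by
  ext i; have := hx.2.2.2 i; have := hz.2.2.2 i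
  by_cases h : β i = min (x i) (z i)
  · simp [upperFill, coverBits, h]
  · simp [upperFill, coverBits, h]; omega

lemma coverBits_of_ne {i : Fin d} (h : x i ≠ z i) : coverBits x z β i := by
  have := hx.2.2.2 i; have := hz.2.2.2 i
  simp only [coverBits, decide_eq_true_eq]; omega

end

section

variable {δ : Fin d → ℤ} (hx : CoCylInterlace d L δ x) (hz : CoCylInterlace d L δ z)
include hx hz

lemma lowerFill_cocoverBits : lowerFill x z (cocoverBits x z δ) = δ := by
  ext i; have := hx.2.2.2 i; have := hz.2.2.2 i
  by_cases h : δ i = max (x i) (z i)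
  · simp [lowerFill, cocoverBits, h]
  · simp [lowerFill, cocoverBits, h]; omega

lemma cocoverBits_of_ne {i : Fin d} (h : x i ≠ z i) : cocoverBits x z δ i := by
  have := hx.2.2.2 i; have := hz.2.2.2 i
  simp only [cocoverBits, decide_eq_true_eq]; omega

end

section

variable (hc : Compatible hd L x z) (ht : ∀ i, x i ≠ z i → t i)
include hc ht

lemma upperFill_mem (i : Fin d) :
    (upperFill x z t i = x i ∨ upperFill x z t i = x i + 1) ∧
      (upperFill x z t i = z i ∨ upperFill x z t i = z i + 1) := by
  have := hc.close i; have := Bool.toNat_le (t i)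
  unfold upperFill
  by_cases h : x i = z i
  · omega
  · simp only [ht i h, Bool.toNat_true]; omega

lemma lowerFill_mem (i : Fin d) :
    (x i = lowerFill x z t i ∨ x i = lowerFill x z t i + 1) ∧
      (z i = lowerFill x z t i ∨ z i = lowerFill x z t i + 1) := by
  have := hc.close i; have := Bool.toNat_le (t i)
  unfold lowerFill
  by_cases h : x i = z i
  · omega
  · simp only [ht i h, Bool.toNat_true]; omega

lemma co_upperFill (hs : IsStaircase hd L (upperFill x z t)) :
    CoCylInterlace d L x (upperFill x z t) ∧ CoCylInterlace d L z (upperFill x z t) :=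
  ⟨⟨hc.left.1, hs.1, fun _ => ⟨hc.left.2, hs.2⟩, fun i => (upperFill_mem hc ht i).1⟩,
    ⟨hc.right.1, hs.1, fun _ => ⟨hc.right.2, hs.2⟩, fun i => (upperFill_mem hc ht i).2⟩⟩

lemma co_lowerFill (hs : IsStaircase hd L (lowerFill x z t)) :
    CoCylInterlace d L (lowerFill x z t) x ∧ CoCylInterlace d L (lowerFill x z t) z :=
  ⟨⟨hs.1, hc.left.1, fun _ => ⟨hs.2, hc.left.2⟩, fun i => (lowerFill_mem hc ht i).1⟩,
    ⟨hs.1, hc.right.1, fun _ => ⟨hs.2, hc.right.2⟩, fun i => (lowerFill_mem hc ht i).2⟩⟩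

end

end CommonCovers

section Exchange

variable (hd : 0 < d) {L : ℕ} (hL : 0 < L) (x z : Fin d → ℤ)

noncomputable def downMap (β : Fin d → ℤ) : Fin d → ℤ :=
  lowerFill x z fun i => coverBits x z β (colReflect hd hL x z i)

noncomputable def upMap (δ : Fin d → ℤ) : Fin d → ℤ :=
  upperFill x z fun i => cocoverBits x z δ (colReflect hd hL x z i)

variable {hd hL x z}

lemma sum_upperFill (t : Fin d → Bool) :
    ∑ i, upperFill x z t i = ∑ i, min (x i) (z i) + ∑ i, ((t i).toNat : ℤ) :=
  Finset.sum_add_distrib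

lemma sum_lowerFill (t : Fin d → Bool) :
    ∑ i, lowerFill x z t i = ∑ i, max (x i) (z i) - ∑ i, ((t i).toNat : ℤ) :=
  Finset.sum_sub_distrib ..

lemma sum_min_add_sum_max :
    ∑ i, min (x i) (z i) + ∑ i, max (x i) (z i) = ∑ i, x i + ∑ i, z i := by
  simp only [← Finset.sum_add_distrib, min_add_max]

section

variable {β : Fin d → ℤ} (hx : CoCylInterlace d L x β) (hz : CoCylInterlace d L z β)
include hx hz

lemma downMap_spec :
    CoCylInterlace d L (downMap hd hL x z β) x ∧ CoCylInterlace d L (downMap hd hL x z β) z ∧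
      ∑ i, downMap hd hL x z β i = ∑ i, x i + ∑ i, z i - ∑ i, β i := by
  have hc : Compatible hd L x z := compatible_of_co_co hx hz
  set t := coverBits x z β
  have hβ : upperFill x z t = β := upperFill_coverBits hx hz
  have hdecr := (isStaircase_upperFill_iff hc (fun i => coverBits_of_ne hx hz)).1
    (by rw [hβ]; exact isStaircase_of_co_right hx)
  have ht' : ∀ i, x i ≠ z i → t (colReflect hd hL x z i) := fun i h => by
    rw [colReflect_of_ne h]; exact coverBits_of_ne hx hz h
  have hs := (isStaircase_lowerFill_iff hc ht').2 fun n hn =>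
    comp_colReflect_rel (fun a b : Bool => a.toNat ≤ b.toNat) hdecr hn
  refine ⟨(co_lowerFill hc ht' hs).1, (co_lowerFill hc ht' hs).2, ?_⟩
  have := sum_upperFill (x := x) (z := z) t
  rw [hβ] at this
  rw [downMap, sum_lowerFill, sum_comp_colReflect fun i => ((t i).toNat : ℤ)]
  linarith [sum_min_add_sum_max (x := x) (z := z)]

lemma upMap_downMap : upMap hd hL x z (downMap hd hL x z β) = β := by
  rw [upMap, downMap, cocoverBits_lowerFill]
  simp only [colReflect_involutive _]
  exact upperFill_coverBits hx hz

end

section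

variable {δ : Fin d → ℤ} (hx : CoCylInterlace d L δ x) (hz : CoCylInterlace d L δ z)
include hx hz

lemma upMap_spec :
    CoCylInterlace d L x (upMap hd hL x z δ) ∧ CoCylInterlace d L z (upMap hd hL x z δ) ∧
      ∑ i, upMap hd hL x z δ i = ∑ i, x i + ∑ i, z i - ∑ i, δ i := by
  have hc : Compatible hd L x z := compatible_of_co_co' hx hz
  set t := cocoverBits x z δ
  have hδ : lowerFill x z t = δ := lowerFill_cocoverBits hx hz
  have hincr := (isStaircase_lowerFill_iff hc (fun i => cocoverBits_of_ne hx hz)).1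
    (by rw [hδ]; exact isStaircase_of_co_left hx)
  have ht' : ∀ i, x i ≠ z i → t (colReflect hd hL x z i) := fun i h => by
    rw [colReflect_of_ne h]; exact cocoverBits_of_ne hx hz h
  have hs := (isStaircase_upperFill_iff hc ht').2 fun n hn =>
    comp_colReflect_rel (fun a b : Bool => b.toNat ≤ a.toNat) hincr hn
  refine ⟨(co_upperFill hc ht' hs).1, (co_upperFill hc ht' hs).2, ?_⟩
  have := sum_lowerFill (x := x) (z := z) t
  rw [hδ] at this
  rw [upMap, sum_upperFill, sum_comp_colReflect fun i => ((t i).toNat : ℤ)]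
  linarith [sum_min_add_sum_max (x := x) (z := z)]

lemma downMap_upMap : downMap hd hL x z (upMap hd hL x z δ) = δ := by
  rw [upMap, downMap, coverBits_upperFill]
  simp only [colReflect_involutive _]
  exact lowerFill_cocoverBits hx hz

end

end Exchange

section AdjacentSwap

variable {k : ℕ} {j j' : Fin k}

lemma val_eq_of_succ_eq_castSucc (hjj' : j.succ = j'.castSucc) : (j' : ℕ) = j + 1 := by
  simpa [Fin.ext_iff] using hjj'.symm

lemma castSucc_ne_succ (j : Fin k) : j.castSucc ≠ j.succ :=
  (Fin.castSucc_lt_succ (i := j)).ne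

lemma succ_ne_succ_of_adjacent (hjj' : j.succ = j'.castSucc) : j'.succ ≠ j.succ :=
  hjj' ▸ (castSucc_ne_succ j').symm

lemma swap_lt_swap (hjj' : j.succ = j'.castSucc) {P Q : Fin k} (hPQ : P < Q)
    (h : ¬ (P = j ∧ Q = j')) : Equiv.swap j j' P < Equiv.swap j j' Q := by
  have := val_eq_of_succ_eq_castSucc hjj'
  rw [Fin.lt_def] at hPQ
  rw [Equiv.swap_apply_def, Equiv.swap_apply_def, Fin.lt_def]
  split_ifs <;> simp only [Fin.ext_iff] at * <;> omega

lemma orderEmbOfFin_filter_swap (hjj' : j.succ = j'.castSucc) {w v : Fin k → Bool}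
    (hv : ∀ i, v i = w (Equiv.swap j j' i)) (hne : w j ≠ w j') (c : Bool) {n : ℕ}
    (hw : (Finset.univ.filter fun i => w i = c).card = n)
    (hv' : (Finset.univ.filter fun i => v i = c).card = n) (r : Fin n) :
    (Finset.univ.filter fun i => v i = c).orderEmbOfFin hv' r =
      Equiv.swap j j' ((Finset.univ.filter fun i => w i = c).orderEmbOfFin hw r) := by
  have hmem : ∀ r, w ((Finset.univ.filter fun i => w i = c).orderEmbOfFin hw r) = c := fun r =>
    (Finset.mem_filter.1 (Finset.orderEmbOfFin_mem _ hw r)).2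
  refine (congrFun (Finset.orderEmbOfFin_unique hv'
    (f := fun r => Equiv.swap j j' ((Finset.univ.filter fun i => w i = c).orderEmbOfFin hw r))
    (fun r => ?_) fun r₁ r₂ h => ?_) r).symm
  · simp [hv, hmem]
  · refine swap_lt_swap hjj' ((Finset.orderEmbOfFin _ hw).strictMono h) ?_
    rintro ⟨h₁, h₂⟩
    exact hne (by rw [← h₁, ← h₂, hmem, hmem])

end AdjacentSwap

section Tableaux

def IsTableau (L k p q : ℕ) (w : Fin k → Bool)
    (hwp : (Finset.univ.filter fun i : Fin k => w i = true).card = p)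
    (hwq : (Finset.univ.filter fun i : Fin k => w i = false).card = q)
    (μ lam : Fin d → ℤ) (a : Fin p → ℕ) (b : Fin q → ℕ) (T : Fin (k + 1) → Fin d → ℤ) : Prop :=
  IsSkewRowStrictOsc d L k w μ lam T ∧ HasWtPlus d k p w hwp T a ∧ HasWtMinus d k q w hwq T b

variable {k p q : ℕ}

def sizeStep (T : Fin (k + 1) → Fin d → ℤ) (i : Fin k) : ℤ :=
  ∑ l, T i.succ l - ∑ l, T i.castSucc l

variable {w v : Fin k → Bool} {T T' : Fin (k + 1) → Fin d → ℤ}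

lemma hasWtPlus_iff {hwp : (Finset.univ.filter fun i : Fin k => w i = true).card = p}
    {a : Fin p → ℕ} : HasWtPlus d k p w hwp T a ↔
      ∀ r, sizeStep T ((Finset.univ.filter fun i => w i = true).orderEmbOfFin hwp r) = a r := by
  simp only [HasWtPlus, sizeStep, Finset.coe_orderIsoOfFin_apply]
  exact forall_congr' fun r => by omega

lemma hasWtMinus_iff {hwq : (Finset.univ.filter fun i : Fin k => w i = false).card = q}
    {b : Fin q → ℕ} : HasWtMinus d k q w hwq T b ↔
      ∀ r, sizeStep T ((Finset.univ.filter fun i => w i = false).orderEmbOfFin hwq r.rev) =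
        -b r := by
  simp only [HasWtMinus, sizeStep, Finset.coe_orderIsoOfFin_apply]
  exact forall_congr' fun r => by omega

variable {j j' : Fin k} (hjj' : j.succ = j'.castSucc) (hv : ∀ i, v i = w (Equiv.swap j j' i))
  (hne : w j ≠ w j')
include hjj' hv hne

lemma hasWtPlus_swap (hT : ∀ i, sizeStep T' (Equiv.swap j j' i) = sizeStep T i)
    {hwp : (Finset.univ.filter fun i : Fin k => w i = true).card = p}
    {hvp : (Finset.univ.filter fun i : Fin k => v i = true).card = p} {a : Fin p → ℕ}
    (h : HasWtPlus d k p w hwp T a) : HasWtPlus d k p v hvp T' a := by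
  rw [hasWtPlus_iff] at h ⊢
  intro r
  rw [orderEmbOfFin_filter_swap hjj' hv hne true hwp hvp, hT, h]

lemma hasWtMinus_swap (hT : ∀ i, sizeStep T' (Equiv.swap j j' i) = sizeStep T i)
    {hwq : (Finset.univ.filter fun i : Fin k => w i = false).card = q}
    {hvq : (Finset.univ.filter fun i : Fin k => v i = false).card = q} {b : Fin q → ℕ}
    (h : HasWtMinus d k q w hwq T b) : HasWtMinus d k q v hvq T' b := by
  rw [hasWtMinus_iff] at h ⊢
  intro r
  rw [orderEmbOfFin_filter_swap hjj' hv hne false hwq hvq, hT, h]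

end Tableaux

section Update

variable {L k p q : ℕ} {w v : Fin k → Bool} {μ lam : Fin d → ℤ} {T : Fin (k + 1) → Fin d → ℤ}
  {m : Fin d → ℤ} {j j' : Fin k}

lemma sizeStep_update_swap (hjj' : j.succ = j'.castSucc)
    (hm : ∑ l, m l = ∑ l, T j.castSucc l + ∑ l, T j'.succ l - ∑ l, T j.succ l) (i : Fin k) :
    sizeStep (Function.update T j.succ m) (Equiv.swap j j' i) = sizeStep T i := by
  rcases eq_or_ne i j with rfl | hij
  · rw [Equiv.swap_apply_left, sizeStep, ← hjj', Function.update_self,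
      Function.update_of_ne (succ_ne_succ_of_adjacent hjj'), sizeStep, hm, hjj']
    ring
  rcases eq_or_ne i j' with rfl | hij'
  · rw [Equiv.swap_apply_right, sizeStep, Function.update_self,
      Function.update_of_ne (castSucc_ne_succ j), sizeStep, hm, hjj']
    ring
  rw [Equiv.swap_apply_of_ne_of_ne hij hij', sizeStep, sizeStep,
    Function.update_of_ne (fun h => hij (Fin.succ_injective _ h)),
    Function.update_of_ne (fun h => hij' (Fin.castSucc_injective _ (h.trans hjj')))]

lemma isSkewRowStrictOsc_update_swap (hjj' : j.succ = j'.castSucc)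
    (hv : ∀ i, v i = w (Equiv.swap j j' i)) (hT : IsSkewRowStrictOsc d L k w μ lam T)
    (hj : if v j then CoCylInterlace d L (T j.castSucc) m else CoCylInterlace d L m (T j.castSucc))
    (hj' : if v j' then CoCylInterlace d L m (T j'.succ) else CoCylInterlace d L (T j'.succ) m) :
    IsSkewRowStrictOsc d L k v μ lam (Function.update T j.succ m) := by
  refine ⟨?_, ?_, fun i => ?_⟩
  · rw [Function.update_of_ne (Fin.succ_ne_zero j).symm]; exact hT.1
  · rw [Function.update_of_ne (hjj' ▸ (Fin.castSucc_lt_last j').ne'), hT.2.1]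
  rcases eq_or_ne i j with rfl | hij
  · rwa [Function.update_self, Function.update_of_ne (castSucc_ne_succ i)]
  rcases eq_or_ne i j' with rfl | hij'
  · rwa [← hjj', Function.update_self, Function.update_of_ne (succ_ne_succ_of_adjacent hjj')]
  rw [hv, Equiv.swap_apply_of_ne_of_ne hij hij',
    Function.update_of_ne (fun h => hij (Fin.succ_injective _ h)),
    Function.update_of_ne (fun h => hij' (Fin.castSucc_injective _ (h.trans hjj')))]
  exact hT.2.2 i

lemma isTableau_update_swap (hjj' : j.succ = j'.castSucc) (hv : ∀ i, v i = w (Equiv.swap j j' i))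
    (hne : w j ≠ w j')
    {hwp : (Finset.univ.filter fun i : Fin k => w i = true).card = p}
    {hwq : (Finset.univ.filter fun i : Fin k => w i = false).card = q}
    {hvp : (Finset.univ.filter fun i : Fin k => v i = true).card = p}
    {hvq : (Finset.univ.filter fun i : Fin k => v i = false).card = q}
    {a : Fin p → ℕ} {b : Fin q → ℕ} (hT : IsTableau L k p q w hwp hwq μ lam a b T)
    (hj : if v j then CoCylInterlace d L (T j.castSucc) m else CoCylInterlace d L m (T j.castSucc))
    (hj' : if v j' then CoCylInterlace d L m (T j'.succ) else CoCylInterlace d L (T j'.succ) m)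
    (hm : ∑ l, m l = ∑ l, T j.castSucc l + ∑ l, T j'.succ l - ∑ l, T j.succ l) :
    IsTableau L k p q v hvp hvq μ lam a b (Function.update T j.succ m) :=
  ⟨isSkewRowStrictOsc_update_swap hjj' hv hT.1 hj hj',
    hasWtPlus_swap hjj' hv hne (sizeStep_update_swap hjj' hm) hT.2.1,
    hasWtMinus_swap hjj' hv hne (sizeStep_update_swap hjj' hm) hT.2.2⟩

end Update

section SwapEquiv

variable {L k p q : ℕ} {w v : Fin k → Bool} {μ lam : Fin d → ℤ} {T : Fin (k + 1) → Fin d → ℤ}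
  {j j' : Fin k}

lemma co_of_plus_minus (hjj' : j.succ = j'.castSucc) (hwj : w j = true) (hwj' : w j' = false)
    (hT : IsSkewRowStrictOsc d L k w μ lam T) :
    CoCylInterlace d L (T j.castSucc) (T j.succ) ∧ CoCylInterlace d L (T j'.succ) (T j.succ) :=
  ⟨by simpa [hwj] using hT.2.2 j, by simpa [hwj', hjj'] using hT.2.2 j'⟩

lemma co_of_minus_plus (hjj' : j.succ = j'.castSucc) (hvj : v j = false) (hvj' : v j' = true)
    (hT : IsSkewRowStrictOsc d L k v μ lam T) :
    CoCylInterlace d L (T j.succ) (T j.castSucc) ∧ CoCylInterlace d L (T j.succ) (T j'.succ) :=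
  ⟨by simpa [hvj] using hT.2.2 j, by simpa [hvj', hjj'] using hT.2.2 j'⟩

variable (hd : 0 < d) (hL : 0 < L) (hjj' : j.succ = j'.castSucc) (hwj : w j = true)
  (hwj' : w j' = false) (hv : ∀ i, v i = w (Equiv.swap j j' i))
  {hwp : (Finset.univ.filter fun i : Fin k => w i = true).card = p}
  {hwq : (Finset.univ.filter fun i : Fin k => w i = false).card = q}
  {hvp : (Finset.univ.filter fun i : Fin k => v i = true).card = p}
  {hvq : (Finset.univ.filter fun i : Fin k => v i = false).card = q}
  {a : Fin p → ℕ} {b : Fin q → ℕ}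

noncomputable def swapEquiv :
    {T // IsTableau L k p q w hwp hwq μ lam a b T} ≃ {T // IsTableau L k p q v hvp hvq μ lam a b T}
    where
  toFun T :=
    ⟨Function.update T.1 j.succ (downMap hd hL (T.1 j.castSucc) (T.1 j'.succ) (T.1 j.succ)), by
      obtain ⟨hx, hz⟩ := co_of_plus_minus hjj' hwj hwj' T.2.1
      obtain ⟨h₁, h₂, hs⟩ := downMap_spec (hd := hd) (hL := hL) hx hz
      exact isTableau_update_swap hjj' hv (by simp [hwj, hwj']) T.2 (by simpa [hv, hwj'])
        (by simpa [hv, hwj]) hs⟩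
  invFun T :=
    ⟨Function.update T.1 j.succ (upMap hd hL (T.1 j.castSucc) (T.1 j'.succ) (T.1 j.succ)), by
      have hvj : v j = false := by simpa [hv] using hwj'
      have hvj' : v j' = true := by simpa [hv] using hwj
      obtain ⟨hx, hz⟩ := co_of_minus_plus hjj' hvj hvj' T.2.1
      obtain ⟨h₁, h₂, hs⟩ := upMap_spec (hd := hd) (hL := hL) hx hz
      exact isTableau_update_swap hjj' (fun i => by rw [hv, Equiv.swap_apply_self])
        (by simp [hvj, hvj']) T.2 (by simpa [hwj]) (by simpa [hwj']) hs⟩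
  left_inv T := by
    obtain ⟨hx, hz⟩ := co_of_plus_minus hjj' hwj hwj' T.2.1
    ext1
    simp only [Function.update_self, Function.update_idem,
      Function.update_of_ne (castSucc_ne_succ j),
      Function.update_of_ne (succ_ne_succ_of_adjacent hjj'), upMap_downMap hx hz,
      Function.update_eq_self]
  right_inv T := by
    obtain ⟨hx, hz⟩ := co_of_minus_plus hjj' (by simpa [hv] using hwj') (by simpa [hv] using hwj)
      T.2.1
    ext1
    simp only [Function.update_self, Function.update_idem,
      Function.update_of_ne (castSucc_ne_succ j),
      Function.update_of_ne (succ_ne_succ_of_adjacent hjj'), downMap_upMap hx hz,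
      Function.update_eq_self]

include hd hL hjj' hwj hwj' hv in
theorem card_eq_of_swap :
    Nat.card {T // IsTableau L k p q w hwp hwq μ lam a b T} =
      Nat.card {T // IsTableau L k p q v hvp hvq μ lam a b T} :=
  Nat.card_congr (swapEquiv hd hL hjj' hwj hwj' hv)

end SwapEquiv

section Words

variable {k : ℕ} {w v : Fin k → Bool}

lemma card_filter_comp_swap (j j' : Fin k) (c : Bool) :
    (Finset.univ.filter fun i => (w ∘ Equiv.swap j j') i = c).card =
      (Finset.univ.filter fun i => w i = c).card :=
  Finset.card_equiv (Equiv.swap j j') fun i => by simp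

lemma exists_plus_minus_of_not_monotone (h : ¬ Monotone w) :
    ∃ j j' : Fin k, j.succ = j'.castSucc ∧ w j = true ∧ w j' = false := by
  cases k with
  | zero => exact absurd (fun i => i.elim0) h
  | succ n =>
    obtain ⟨i, hi⟩ := not_forall.1 (mt Fin.monotone_iff_le_succ.2 h)
    refine ⟨i.castSucc, i.succ, Fin.succ_castSucc i, ?_⟩
    revert hi
    cases w i.castSucc <;> cases w i.succ <;> decide

/-- Monotone words `false < true` are `−⋯−+⋯+`, so they are determined by their number of `+`. -/
lemma eq_of_monotone_of_card_eq (hw : Monotone w) (hv : Monotone v)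
    (h : (Finset.univ.filter fun i => w i = true).card =
      (Finset.univ.filter fun i => v i = true).card) : w = v := by
  have key : ∀ {w v : Fin k → Bool}, Monotone w → Monotone v → ∀ i, w i = true → v i = false →
      (Finset.univ.filter fun i => v i = true).card <
        (Finset.univ.filter fun i => w i = true).card := by
    intro w v hw hv i hwi hvi
    refine Finset.card_lt_card ((Finset.ssubset_iff_of_subset fun i' hi' => ?_).2
      ⟨i, by simpa using hwi, by simp [hvi]⟩)
    simp only [Finset.mem_filter, Finset.mem_univ, true_and] at hi' ⊢
    rcases le_total i' i with hle | hle
    · exact absurd (hv hle) (by simp [hi', hvi])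
    · have := hw hle
      rw [hwi] at this
      revert this; cases w i' <;> decide
  funext i
  cases hwi : w i <;> cases hvi : v i
  · rfl
  · exact absurd h (key hv hw i hvi hwi).ne
  · exact absurd h (key hw hv i hwi hvi).ne'
  · rfl

def plusPositionSum (w : Fin k → Bool) : ℕ := ∑ i, if w i then (i : ℕ) else 0

lemma plusPositionSum_le (w : Fin k → Bool) : plusPositionSum w ≤ k * k := by
  calc plusPositionSum w ≤ Finset.univ.card • k :=
        Finset.sum_le_card_nsmul _ _ _ fun i _ => by split_ifs <;> omega
    _ = k * k := by simp

lemma plusPositionSum_swap {j j' : Fin k} (hjj' : j.succ = j'.castSucc) (hwj : w j = true)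
    (hwj' : w j' = false) : plusPositionSum (w ∘ Equiv.swap j j') = plusPositionSum w + 1 := by
  have hj' := val_eq_of_succ_eq_castSucc hjj'
  have hpoint : ∀ i, (if w i then (Equiv.swap j j' i : ℕ) else 0) =
      (if w i then (i : ℕ) else 0) + if i = j then 1 else 0 := by
    intro i
    rcases eq_or_ne i j with rfl | hij
    · simp [hwj, hj']
    rcases eq_or_ne i j' with rfl | hij'
    · simp [hwj', hij]
    simp [Equiv.swap_apply_of_ne_of_ne hij hij', hij]
  rw [plusPositionSum, Fintype.sum_equiv (Equiv.swap j j') _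
    (fun i => if w i then (Equiv.swap j j' i : ℕ) else 0) (fun i => by simp)]
  simp only [hpoint, Finset.sum_add_distrib, Finset.sum_ite_eq',
    Finset.mem_univ, if_true, plusPositionSum]

end Words

/-- Each exchange `+−` ↦ `−+` raises the bounded quantity `plusPositionSum`, so both words are
driven to the unique monotone word `−⋯−+⋯+` with `p` letters `+`. -/
theorem card_isTableau_eq {L k p q : ℕ} (hd : 0 < d) (hL : 0 < L) (μ lam : Fin d → ℤ)
    (a : Fin p → ℕ) (b : Fin q → ℕ) (w v : Fin k → Bool)
    (hwp : (Finset.univ.filter fun i : Fin k => w i = true).card = p)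
    (hwq : (Finset.univ.filter fun i : Fin k => w i = false).card = q)
    (hvp : (Finset.univ.filter fun i : Fin k => v i = true).card = p)
    (hvq : (Finset.univ.filter fun i : Fin k => v i = false).card = q) :
    Nat.card {T // IsTableau L k p q w hwp hwq μ lam a b T} =
      Nat.card {T // IsTableau L k p q v hvp hvq μ lam a b T} := by
  induction hn : (k * k - plusPositionSum w) + (k * k - plusPositionSum v)
    using Nat.strong_induction_on generalizing w v with
  | _ n ih =>
  by_cases hw : Monotone w
  · by_cases hv : Monotone v
    · obtain rfl := eq_of_monotone_of_card_eq hw hv (hwp.trans hvp.symm)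
      rfl
    obtain ⟨j, j', hjj', hvj, hvj'⟩ := exists_plus_minus_of_not_monotone hv
    have := plusPositionSum_swap hjj' hvj hvj'
    have := plusPositionSum_le (v ∘ Equiv.swap j j')
    exact (ih _ (by omega) w (v ∘ Equiv.swap j j') hwp hwq
      ((card_filter_comp_swap j j' true).trans hvp) ((card_filter_comp_swap j j' false).trans hvq)
      rfl).trans (card_eq_of_swap hd hL hjj' hvj hvj' fun _ => rfl).symm
  obtain ⟨j, j', hjj', hwj, hwj'⟩ := exists_plus_minus_of_not_monotone hw
  have := plusPositionSum_swap hjj' hwj hwj'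
  have := plusPositionSum_le (w ∘ Equiv.swap j j')
  exact (card_eq_of_swap hd hL hjj' hwj hwj' fun _ => rfl).trans
    (ih _ (by omega) (w ∘ Equiv.swap j j') v ((card_filter_comp_swap j j' true).trans hwp)
      ((card_filter_comp_swap j j' false).trans hwq) hvp hvq rfl)

end SkewRowStrict

theorem skew_rowstrict_count_independent_of_type_sequence_general
    (d L k p q : ℕ) (hd : 0 < d) (hL : 0 < L) (w v : Fin k → Bool)
    (hwp : (Finset.univ.filter fun i : Fin k => w i = true).card = p)
    (hwq : (Finset.univ.filter fun i : Fin k => w i = false).card = q)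
    (hvp : (Finset.univ.filter fun i : Fin k => v i = true).card = p)
    (hvq : (Finset.univ.filter fun i : Fin k => v i = false).card = q)
    (μ lam : Fin d → ℤ)
    (a : Fin p → ℕ) (b : Fin q → ℕ) :
    Nat.card {T : Fin (k + 1) → Fin d → ℤ //
        IsSkewRowStrictOsc d L k w μ lam T ∧ HasWtPlus d k p w hwp T a ∧
        HasWtMinus d k q w hwq T b} =
    Nat.card {T : Fin (k + 1) → Fin d → ℤ //
        IsSkewRowStrictOsc d L k v μ lam T ∧ HasWtPlus d k p v hvp T a ∧
        HasWtMinus d k q v hvq T b} :=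
  SkewRowStrict.card_isTableau_eq hd hL μ lam a b w v hwp hwq hvp hvq

/-- Row-strict skew correspondence: for type sequences `w`, `v` with the same number of
`+`'s and `−`'s, the number of skew `(d,L)`-cylindric row-strict `w`-oscillating
tableaux with given inner shape, outer shape and weights equals the corresponding number
for `v`. -/
theorem skew_rowstrict_count_independent_of_type_sequence
    (d L k p q : ℕ) (hd : 0 < d) (hL : 0 < L) (w v : Fin k → Bool)
    (hwp : (Finset.univ.filter fun i : Fin k => w i = true).card = p)
    (hwq : (Finset.univ.filter fun i : Fin k => w i = false).card = q)
    (hvp : (Finset.univ.filter fun i : Fin k => v i = true).card = p)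
    (hvq : (Finset.univ.filter fun i : Fin k => v i = false).card = q)
    (μ lam : Fin d → ℤ) (hμ : Antitone μ) (hlam : Antitone lam)
    (hμL : ∀ h : 0 < d, μ ⟨0, h⟩ - μ ⟨d - 1, Nat.sub_lt h Nat.one_pos⟩ ≤ (L : ℤ))
    (hlamL : ∀ h : 0 < d, lam ⟨0, h⟩ - lam ⟨d - 1, Nat.sub_lt h Nat.one_pos⟩ ≤ (L : ℤ))
    (a : Fin p → ℕ) (b : Fin q → ℕ) :
    Nat.card {T : Fin (k + 1) → Fin d → ℤ //
        IsSkewRowStrictOsc d L k w μ lam T ∧ HasWtPlus d k p w hwp T a ∧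
        HasWtMinus d k q w hwq T b} =
    Nat.card {T : Fin (k + 1) → Fin d → ℤ //
        IsSkewRowStrictOsc d L k v μ lam T ∧ HasWtPlus d k p v hvp T a ∧
        HasWtMinus d k q v hvq T b} :=
  skew_rowstrict_count_independent_of_type_sequence_general d L k p q hd hL w v hwp hwq hvp hvq μ
    lam a b
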